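/- Simplification commutes with restriction to diagonal lines: for any multiparameter persistence module M and any point a ∈ ℝⁿ, the restriction of S_ε(M) to the slope-(1,...,1) line L_a equals the ε-simplification of the restriction M^{L_a}, i.e. S_ε(M)^{L_a} = S_ε(M^{L_a}). -/

import Mathlib

/-- A persistence module over a poset `P` with coefficients in a field `K`:
a functor from `(P, ≤)` to the category of `K`-vector spaces. -/
structure PMod (P : Type) [Preorder P] (K : Type) [Field K] where
  V : P → Type
  [addCommGroup : ∀ a, AddCommGroup (V a)]
  [module : ∀ a, Module K (V a)]
  map : ∀ a b : P, a ≤ b → (V a →ₗ[K] V b)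
  map_refl : ∀ a, map a a le_rfl = LinearMap.id
  map_comp : ∀ a b c (hab : a ≤ b) (hbc : b ≤ c),
    (map b c hbc).comp (map a b hab) = map a c (hab.trans hbc)

attribute [instance] PMod.addCommGroup PMod.module

/-- The diagonal vector `(ε, ..., ε)` in ℝⁿ. -/
def diag (n : ℕ) (ε : ℝ) : Fin n → ℝ := fun _ => ε

lemma le_add_diag {n : ℕ} {a : Fin n → ℝ} {ε : ℝ} (hε : 0 ≤ ε) :
    a ≤ a + diag n ε := by
  intro i
  simp only [Pi.add_apply, diag, le_add_iff_nonneg_right]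
  exact hε

/-- An `ε`-interleaving between multiparameter persistence modules `M` and `N`:
natural transformations `f : M ⇒ N ∘ T_ε` and `g : N ⇒ M ∘ T_ε` whose composites
are the internal `2ε`-shift morphisms. -/
def Interleaving {n : ℕ} {K : Type} [Field K] (M N : PMod (Fin n → ℝ) K) (ε : ℝ) : Prop :=
  ∃ hε : 0 ≤ ε,
  ∃ (f : ∀ a, M.V a →ₗ[K] N.V (a + diag n ε)) (g : ∀ a, N.V a →ₗ[K] M.V (a + diag n ε)),
    (∀ a b (h : a ≤ b),
      (f b).comp (M.map a b h)
        = (N.map (a + diag n ε) (b + diag n ε) (add_le_add h le_rfl)).comp (f a)) ∧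
    (∀ a b (h : a ≤ b),
      (g b).comp (N.map a b h)
        = (M.map (a + diag n ε) (b + diag n ε) (add_le_add h le_rfl)).comp (g a)) ∧
    (∀ a, (g (a + diag n ε)).comp (f a)
        = M.map a (a + diag n ε + diag n ε) ((le_add_diag hε).trans (le_add_diag hε))) ∧
    (∀ a, (f (a + diag n ε)).comp (g a)
        = N.map a (a + diag n ε + diag n ε) ((le_add_diag hε).trans (le_add_diag hε)))

/-- The interleaving distance. -/
noncomputable def dI {n : ℕ} {K : Type} [Field K] (M N : PMod (Fin n → ℝ) K) : ℝ :=
  sInf {ε | Interleaving M N ε}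

/-- The `ε`-simplification `S_ε(M) = (Im φ_ε^M) ∘ T_ε` of a multiparameter
persistence module. -/
noncomputable def SimpMod {n : ℕ} {K : Type} [Field K] (ε : ℝ) (hε : 0 ≤ ε)
    (M : PMod (Fin n → ℝ) K) : PMod (Fin n → ℝ) K where
  V a := ↥(LinearMap.range (M.map a (a + diag n ε) (le_add_diag hε)))
  map a b h := (M.map (a + diag n ε) (b + diag n ε) (add_le_add h le_rfl)).restrict
    (by
      rintro x ⟨y, rfl⟩
      refine ⟨M.map a b h y, ?_⟩
      have h1 := LinearMap.congr_fun
        (M.map_comp a (a + diag n ε) (b + diag n ε) (le_add_diag hε) (add_le_add h le_rfl)) y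
      have h2 := LinearMap.congr_fun
        (M.map_comp a b (b + diag n ε) h (le_add_diag hε)) y
      simp only [LinearMap.comp_apply] at h1 h2
      rw [h2, ← h1])
  map_refl a := by
    ext x
    simp [LinearMap.restrict_apply, M.map_refl]
  map_comp a b c hab hbc := by
    ext x
    have h1 := LinearMap.congr_fun
      (M.map_comp (a + diag n ε) (b + diag n ε) (c + diag n ε)
        (add_le_add hab le_rfl) (add_le_add hbc le_rfl)) x.1
    simp only [LinearMap.comp_apply] at h1 ⊢
    simp [LinearMap.restrict_apply, h1]

/-- The `ε`-simplification of a 1-parameter persistence module. -/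
noncomputable def SimpMod1 {K : Type} [Field K] (ε : ℝ) (hε : 0 ≤ ε)
    (M : PMod ℝ K) : PMod ℝ K where
  V t := ↥(LinearMap.range (M.map t (t + ε) (le_add_of_nonneg_right hε)))
  map s t h := (M.map (s + ε) (t + ε) (add_le_add h le_rfl)).restrict
    (by
      rintro x ⟨y, rfl⟩
      refine ⟨M.map s t h y, ?_⟩
      have h1 := LinearMap.congr_fun
        (M.map_comp s (s + ε) (t + ε) (le_add_of_nonneg_right hε) (add_le_add h le_rfl)) y
      have h2 := LinearMap.congr_fun
        (M.map_comp s t (t + ε) h (le_add_of_nonneg_right hε)) y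
      simp only [LinearMap.comp_apply] at h1 h2
      rw [h2, ← h1])
  map_refl t := by
    ext x
    simp [LinearMap.restrict_apply, M.map_refl]
  map_comp s t u hst htu := by
    ext x
    have h1 := LinearMap.congr_fun
      (M.map_comp (s + ε) (t + ε) (u + ε)
        (add_le_add hst le_rfl) (add_le_add htu le_rfl)) x.1
    simp only [LinearMap.comp_apply] at h1 ⊢
    simp [LinearMap.restrict_apply, h1]

/-- Restriction of an `n`-parameter persistence module along a monotone line
`L : ℝ → ℝⁿ`, giving a 1-parameter persistence module. -/
def restrictLine {n : ℕ} {K : Type} [Field K] (M : PMod (Fin n → ℝ) K)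
    (L : ℝ → (Fin n → ℝ)) (hL : Monotone L) : PMod ℝ K where
  V t := M.V (L t)
  map s t h := M.map (L s) (L t) (hL h)
  map_refl t := M.map_refl (L t)
  map_comp s t u hst htu := M.map_comp _ _ _ (hL hst) (hL htu)

/-- The diagonal (slope `(1,...,1)`) line through `a`, isometrically parametrized
with respect to the sup-norm. -/
def diagLine {n : ℕ} (a : Fin n → ℝ) : ℝ → (Fin n → ℝ) := fun t => a + diag n t

lemma diagLine_mono {n : ℕ} (a : Fin n → ℝ) : Monotone (diagLine a) := by
  intro s t h i
  simp only [diagLine, Pi.add_apply, diag]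
  linarith

/-- Isomorphism of persistence modules: a natural family of linear equivalences. -/
def PModIso {P : Type} [Preorder P] {K : Type} [Field K] (M N : PMod P K) : Prop :=
  ∃ e : ∀ a, M.V a ≃ₗ[K] N.V a,
    ∀ a b (h : a ≤ b),
      (e b).toLinearMap.comp (M.map a b h) = (N.map a b h).comp (e a).toLinearMap

/-- Transport along an equality of indices, implemented via the structure maps. -/
noncomputable def PMod.eqv {P : Type} [Preorder P] {K : Type} [Field K] (M : PMod P K)
    {x y : P} (h : x = y) : M.V x ≃ₗ[K] M.V y :=
  LinearEquiv.ofLinear (M.map x y h.le) (M.map y x h.ge)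
    (by rw [M.map_comp]; exact M.map_refl y)
    (by rw [M.map_comp]; exact M.map_refl x)

/-- Simplification commutes with restriction to diagonal lines:
`S_ε(M)^{L_a} = S_ε(M^{L_a})` (as persistence modules, up to natural isomorphism). -/
theorem simplification_commutes_with_diagonal_restriction {n : ℕ} {K : Type} [Field K]
    (ε : ℝ) (hε : 0 ≤ ε) (M : PMod (Fin n → ℝ) K) (a : Fin n → ℝ) :
    PModIso (restrictLine (SimpMod ε hε M) (diagLine a) (diagLine_mono a))
      (SimpMod1 ε hε (restrictLine M (diagLine a) (diagLine_mono a))) := by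
  have key : ∀ t : ℝ, diagLine a t + diag n ε = diagLine a (t + ε) := by
    intro t; funext i; simp [diagLine, diag]; ring
  have hrange : ∀ t : ℝ,
      (LinearMap.range (M.map (diagLine a t) (diagLine a t + diag n ε)
        (le_add_diag hε))).map (M.eqv (key t)).toLinearMap
      = LinearMap.range ((restrictLine M (diagLine a) (diagLine_mono a)).map t (t + ε)
        (le_add_of_nonneg_right hε)) := by
    intro t
    rw [← LinearMap.range_comp]
    congr 1
    exact M.map_comp _ _ _ _ _
  refine ⟨fun t =>
    (LinearEquiv.submoduleMap (M.eqv (key t)) _).trans (LinearEquiv.ofEq _ _ (hrange t)),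
    ?_⟩
  intro s t h
  ext x
  apply Subtype.ext
  show (M.eqv (key t)).toLinearMap
      ((M.map (diagLine a s + diag n ε) (diagLine a t + diag n ε) _) x.1)
    = (M.map (diagLine a (s + ε)) (diagLine a (t + ε)) _)
        ((M.eqv (key s)).toLinearMap x.1)
  show (M.map (diagLine a t + diag n ε) (diagLine a (t + ε)) _)
      ((M.map (diagLine a s + diag n ε) (diagLine a t + diag n ε) _) x.1)
    = (M.map (diagLine a (s + ε)) (diagLine a (t + ε)) _)
        ((M.map (diagLine a s + diag n ε) (diagLine a (s + ε)) _) x.1)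
  rw [← LinearMap.comp_apply, ← LinearMap.comp_apply, M.map_comp, M.map_comp]
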